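/- Let A_1, …, A_N be projective observables on ℂ^d. Then the mutual incompatibility Q_F(A_1, …, A_N) := (1/N²) Σ_{i≠j} Q_F(A_i→A_j) satisfies Q_F(A_1, …, A_N) ≤ (1 − 1/N)(1 − 1/d). -/

import Mathlib

open scoped BigOperators ComplexOrder
open Matrix

noncomputable section

/-- A projective observable: a finite family of mutually orthogonal
self-adjoint idempotents summing to the identity. -/
def IsProjObs {d r : ℕ} (P : Fin r → Matrix (Fin d) (Fin d) ℂ) : Prop :=
  (∀ i, (P i).IsHermitian) ∧ (∀ i, P i * P i = P i) ∧
    (∀ i k, i ≠ k → P i * P k = 0) ∧ (∑ i, P i = 1)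

/-- A density matrix: positive semidefinite with unit trace. -/
def IsDensity {d : ℕ} (ρ : Matrix (Fin d) (Fin d) ℂ) : Prop :=
  ρ.PosSemidef ∧ ρ.trace = 1

/-- The measurement channel `E^A(ρ) = Σ_i P_i ρ P_i` of a projective observable. -/
def measChannel {d r : ℕ} (P : Fin r → Matrix (Fin d) (Fin d) ℂ)
    (ρ : Matrix (Fin d) (Fin d) ℂ) : Matrix (Fin d) (Fin d) ℂ :=
  ∑ i, P i * ρ * P i

/-- `p^B_ρ(j) = tr(P^B_j ρ)`. -/
def probB {d rB : ℕ} (Q : Fin rB → Matrix (Fin d) (Fin d) ℂ)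
    (ρ : Matrix (Fin d) (Fin d) ℂ) (j : Fin rB) : ℝ :=
  ((Q j * ρ).trace).re

/-- `q^{A→B}_ρ(j) = tr(P^B_j Σ_i P^A_i ρ P^A_i)`. -/
def probAB {d rA rB : ℕ} (P : Fin rA → Matrix (Fin d) (Fin d) ℂ)
    (Q : Fin rB → Matrix (Fin d) (Fin d) ℂ)
    (ρ : Matrix (Fin d) (Fin d) ℂ) (j : Fin rB) : ℝ :=
  ((Q j * measChannel P ρ).trace).re

open Classical in
/-- The positive semidefinite square root of a PSD matrix (junk value `0` otherwise). -/
noncomputable def msqrt {d : ℕ} (A : Matrix (Fin d) (Fin d) ℂ) :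
    Matrix (Fin d) (Fin d) ℂ :=
  if h : A.PosSemidef then (h.1.eigenvectorUnitary : Matrix (Fin d) (Fin d) ℂ) *
    diagonal ((↑) ∘ (√·) ∘ h.1.eigenvalues) *
    (star h.1.eigenvectorUnitary : Matrix (Fin d) (Fin d) ℂ) else 0

/-- `|X| = √(Xᴴ X)`, the positive semidefinite absolute value of a matrix. -/
noncomputable def matAbs {d : ℕ} (X : Matrix (Fin d) (Fin d) ℂ) :
    Matrix (Fin d) (Fin d) ℂ :=
  msqrt (Xᴴ * X)

/-- The quantum fidelity `F(ρ,σ) = tr √(√ρ σ √ρ)`. -/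
noncomputable def qFid {d : ℕ} (ρ σ : Matrix (Fin d) (Fin d) ℂ) : ℝ :=
  ((msqrt (msqrt ρ * σ * msqrt ρ)).trace).re

/-- Variational distance `D_1(p,q) = (1/2) Σ_j |p_j − q_j|`. -/
def distL1 {rB : ℕ} (p q : Fin rB → ℝ) : ℝ := (1 / 2) * ∑ j, |p j - q j|

/-- Chebyshev distance `D_∞(p,q) = max_j |p_j − q_j|`. -/
noncomputable def distLinf {rB : ℕ} (p q : Fin rB → ℝ) : ℝ := ⨆ j, |p j - q j|

/-- Classical fidelity `F(p,q) = Σ_j √(p_j q_j)`. -/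
noncomputable def classFid {rB : ℕ} (p q : Fin rB → ℝ) : ℝ :=
  ∑ j, Real.sqrt (p j * q j)

/-- `Q_1(A→B)`. -/
noncomputable def Q1 {d rA rB : ℕ} (P : Fin rA → Matrix (Fin d) (Fin d) ℂ)
    (Q : Fin rB → Matrix (Fin d) (Fin d) ℂ) : ℝ :=
  sSup {x : ℝ | ∃ ρ, IsDensity ρ ∧ x = distL1 (probAB P Q ρ) (probB Q ρ)}

/-- `Q_∞(A→B)`. -/
noncomputable def Qinf {d rA rB : ℕ} (P : Fin rA → Matrix (Fin d) (Fin d) ℂ)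
    (Q : Fin rB → Matrix (Fin d) (Fin d) ℂ) : ℝ :=
  sSup {x : ℝ | ∃ ρ, IsDensity ρ ∧ x = distLinf (probAB P Q ρ) (probB Q ρ)}

/-- `Q_F(A→B)`. -/
noncomputable def QF {d rA rB : ℕ} (P : Fin rA → Matrix (Fin d) (Fin d) ℂ)
    (Q : Fin rB → Matrix (Fin d) (Fin d) ℂ) : ℝ :=
  sSup {x : ℝ | ∃ ρ, IsDensity ρ ∧
    x = 1 - (classFid (probAB P Q ρ) (probB Q ρ)) ^ 2}

/-- The rank-one projection `|v⟩⟨v|` onto a (unit) vector `v`. -/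
def proj {d : ℕ} (v : Fin d → ℂ) : Matrix (Fin d) (Fin d) ℂ :=
  Matrix.vecMulVec v (star v)

/-! Write `‖X‖_ρ² = re tr(X ρ Xᴴ)` for the seminorm on matrices induced by a state `ρ`. For
projective observables `P` and `Q` one has `p_j = ‖Q_j‖_ρ²` and `q_j = Σ_i ‖Q_j P_i‖_ρ²`.
At most `d` of the `P_i` are nonzero (their nonzero columns are pairwise orthogonal), so
`Q_j = Σ_{P_i ≠ 0} Q_j P_i` and Cauchy–Schwarz give `p_j ≤ d q_j`, hence
`p_j ≤ √d √(q_j p_j)`. Summing over `j` yields `F(q, p)² ≥ 1/d`, i.e. `Q_F(A→B) ≤ 1 - 1/d` for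
every pair, and averaging over the `N(N-1)` ordered pairs `i ≠ j` gives the bound. -/

open Finset in
theorem norm_sum_sq_le_card_mul_sum_norm_sq {ι E : Type*} [SeminormedAddCommGroup E]
    (s : Finset ι) (f : ι → E) : ‖∑ i ∈ s, f i‖ ^ 2 ≤ #s * ∑ i ∈ s, ‖f i‖ ^ 2 :=
  (pow_le_pow_left₀ (norm_nonneg _) (norm_sum_le s f) 2).trans (sq_sum_le_card_mul_sum_sq ..)

section RCLike

variable {n 𝕜 : Type*} [Fintype n] [RCLike 𝕜]

lemma re_trace_mul_mul_conjTranspose_nonneg {ρ : Matrix n n 𝕜} (hρ : ρ.PosSemidef)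
    (X : Matrix n n 𝕜) : 0 ≤ RCLike.re (X * ρ * Xᴴ).trace :=
  (RCLike.nonneg_iff.mp (hρ.mul_mul_conjTranspose_same X).trace_nonneg).1

open Finset in
lemma re_trace_sum_mul_mul_conjTranspose_le {ι : Type*} {ρ : Matrix n n 𝕜}
    (hρ : ρ.PosSemidef) (s : Finset ι) (X : ι → Matrix n n 𝕜) :
    RCLike.re ((∑ i ∈ s, X i) * ρ * (∑ i ∈ s, X i)ᴴ).trace ≤
      #s * ∑ i ∈ s, RCLike.re (X i * ρ * (X i)ᴴ).trace := by
  let := ρ.toMatrixSeminormedAddCommGroup hρ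
  let := ρ.toMatrixInnerProductSpace hρ
  have norm_sq (Y : Matrix n n 𝕜) : ‖Y‖ ^ 2 = RCLike.re (Y * ρ * Yᴴ).trace := by
    rw [@norm_sq_eq_re_inner 𝕜]
    rfl
  simpa only [norm_sq] using norm_sum_sq_le_card_mul_sum_norm_sq s X

lemma trace_mul_eq_trace_mul_mul_conjTranspose {E : Matrix n n 𝕜}
    (hE : E.IsHermitian) (hEE : E * E = E) (X : Matrix n n 𝕜) :
    (E * X).trace = (E * X * Eᴴ).trace := by
  rw [hE.eq, trace_mul_cycle, hEE]

end RCLike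

section ProjObs

variable {d : ℕ}

open Finset in
lemma IsProjObs.card_ne_zero_le {r : ℕ} {P : Fin r → Matrix (Fin d) (Fin d) ℂ}
    (hP : IsProjObs P) : #{i | P i ≠ 0} ≤ d := by
  let S : Finset (Fin r) := {i | P i ≠ 0}
  have nonzero_entry : ∀ i : S, ∃ kc : Fin d × Fin d, P i kc.1 kc.2 ≠ 0 := fun i => by
    obtain ⟨k, hk⟩ := Function.ne_iff.mp (mem_filter.mp i.2).2
    obtain ⟨c, hc⟩ := Function.ne_iff.mp hk
    exact ⟨(k, c), hc⟩
  choose kc hkc using nonzero_entry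
  let v : S → EuclideanSpace ℂ (Fin d) := fun i => WithLp.toLp 2 fun k => P i k (kc i).2
  have v_ne_zero : ∀ i, v i ≠ 0 := fun i h =>
    hkc i (by simpa [v] using congrArg (· (kc i).1) h)
  have v_orthogonal : Pairwise fun i j : S => inner ℂ (v i) (v j) = 0 := fun i j hij => by
    have hPP : P i * P j = 0 := hP.2.2.1 _ _ (Subtype.coe_ne_coe.mpr hij)
    calc inner ℂ (v i) (v j) = ((P i)ᴴ * P j) (kc i).2 (kc j).2 := by
          simp [v, PiLp.inner_apply, Matrix.mul_apply, mul_comm]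
      _ = 0 := by rw [(hP.1 i).eq, hPP, Matrix.zero_apply]
  simpa only [Fintype.card_coe, finrank_euclideanSpace, Fintype.card_fin] using
    (linearIndependent_of_ne_zero_of_inner_eq_zero v_ne_zero v_orthogonal).fintype_card_le_finrank

lemma probB_eq_re_trace {r : ℕ} {Q : Fin r → Matrix (Fin d) (Fin d) ℂ} (hQ : IsProjObs Q)
    (ρ : Matrix (Fin d) (Fin d) ℂ) (j : Fin r) :
    probB Q ρ j = (Q j * ρ * (Q j)ᴴ).trace.re := by
  rw [probB, trace_mul_eq_trace_mul_mul_conjTranspose (hQ.1 j) (hQ.2.1 j)]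

lemma probAB_eq_sum_re_trace {rA rB : ℕ} {P : Fin rA → Matrix (Fin d) (Fin d) ℂ}
    {Q : Fin rB → Matrix (Fin d) (Fin d) ℂ} (hP : IsProjObs P) (hQ : IsProjObs Q)
    (ρ : Matrix (Fin d) (Fin d) ℂ) (j : Fin rB) :
    probAB P Q ρ j = ∑ i, (Q j * P i * ρ * (Q j * P i)ᴴ).trace.re := by
  rw [probAB, measChannel, Finset.mul_sum, trace_sum, Complex.re_sum]
  refine Finset.sum_congr rfl fun i _ => ?_
  rw [trace_mul_eq_trace_mul_mul_conjTranspose (hQ.1 j) (hQ.2.1 j), conjTranspose_mul,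
    (hP.1 i).eq]
  simp only [Matrix.mul_assoc]

lemma probB_nonneg {r : ℕ} {Q : Fin r → Matrix (Fin d) (Fin d) ℂ} (hQ : IsProjObs Q)
    {ρ : Matrix (Fin d) (Fin d) ℂ} (hρ : ρ.PosSemidef) (j : Fin r) : 0 ≤ probB Q ρ j := by
  rw [probB_eq_re_trace hQ]
  exact re_trace_mul_mul_conjTranspose_nonneg hρ _

lemma sum_probB {r : ℕ} {Q : Fin r → Matrix (Fin d) (Fin d) ℂ} (hQ : IsProjObs Q)
    {ρ : Matrix (Fin d) (Fin d) ℂ} (hρ : IsDensity ρ) : ∑ j, probB Q ρ j = 1 := by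
  simp only [probB]
  rw [← Complex.re_sum, ← trace_sum, ← Finset.sum_mul, hQ.2.2.2, Matrix.one_mul, hρ.2,
    Complex.one_re]

open Finset in
lemma probB_le_mul_probAB {rA rB : ℕ} {P : Fin rA → Matrix (Fin d) (Fin d) ℂ}
    {Q : Fin rB → Matrix (Fin d) (Fin d) ℂ} (hP : IsProjObs P) (hQ : IsProjObs Q)
    {ρ : Matrix (Fin d) (Fin d) ℂ} (hρ : ρ.PosSemidef) (j : Fin rB) :
    probB Q ρ j ≤ d * probAB P Q ρ j := by
  let term i := (Q j * P i * ρ * (Q j * P i)ᴴ).trace.re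
  have term_nonneg i : 0 ≤ term i := re_trace_mul_mul_conjTranspose_nonneg hρ _
  have sum_nonzero : ∑ i with P i ≠ 0, Q j * P i = Q j := by
    rw [sum_filter_of_ne (p := (P · ≠ 0)) fun i _ h hP0 => h (by rw [hP0, Matrix.mul_zero]),
      ← Finset.mul_sum, hP.2.2.2, Matrix.mul_one]
  calc probB Q ρ j
      = ((∑ i with P i ≠ 0, Q j * P i) * ρ * (∑ i with P i ≠ 0, Q j * P i)ᴴ).trace.re := by
        rw [sum_nonzero, probB_eq_re_trace hQ]
    _ ≤ #{i | P i ≠ 0} * ∑ i with P i ≠ 0, term i :=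
        re_trace_sum_mul_mul_conjTranspose_le hρ _ _
    _ ≤ d * ∑ i, term i := by
        gcongr
        · exact sum_nonneg fun i _ => term_nonneg i
        · exact hP.card_ne_zero_le
        · exact fun i _ _ => term_nonneg i
        · exact subset_univ _
    _ = d * probAB P Q ρ j := by rw [probAB_eq_sum_re_trace hP hQ]

end ProjObs

lemma one_le_mul_classFid_sq {r : ℕ} {p q : Fin r → ℝ} {c : ℝ} (hc : 0 ≤ c)
    (hp : ∀ j, 0 ≤ p j) (hsum : ∑ j, p j = 1) (hpq : ∀ j, p j ≤ c * q j) :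
    1 ≤ c * classFid q p ^ 2 := by
  have hterm j : p j ≤ √c * √(q j * p j) := by
    rw [← Real.sqrt_mul hc, ← mul_assoc]
    exact Real.le_sqrt_of_sq_le (by nlinarith [hp j, hpq j])
  have h1 : 1 ≤ √c * classFid q p := by
    rw [classFid, Finset.mul_sum, ← hsum]
    exact Finset.sum_le_sum fun j _ => hterm j
  calc (1 : ℝ) ≤ (√c * classFid q p) ^ 2 := by nlinarith
    _ = c * classFid q p ^ 2 := by rw [mul_pow, Real.sq_sqrt hc]

lemma one_div_le_classFid_sq {d rA rB : ℕ} {P : Fin rA → Matrix (Fin d) (Fin d) ℂ}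
    {Q : Fin rB → Matrix (Fin d) (Fin d) ℂ} (hP : IsProjObs P) (hQ : IsProjObs Q)
    {ρ : Matrix (Fin d) (Fin d) ℂ} (hρ : IsDensity ρ) :
    1 / (d : ℝ) ≤ classFid (probAB P Q ρ) (probB Q ρ) ^ 2 := by
  have h := one_le_mul_classFid_sq (Nat.cast_nonneg d) (probB_nonneg hQ hρ.1) (sum_probB hQ hρ)
    (probB_le_mul_probAB hP hQ hρ.1)
  have hd : (0 : ℝ) < d := by
    by_contra! hd
    nlinarith [sq_nonneg (classFid (probAB P Q ρ) (probB Q ρ))]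
  rwa [one_div, inv_le_iff_one_le_mul₀' hd]

lemma QF_le {d rA rB : ℕ} {P : Fin rA → Matrix (Fin d) (Fin d) ℂ}
    {Q : Fin rB → Matrix (Fin d) (Fin d) ℂ} (hP : IsProjObs P) (hQ : IsProjObs Q) :
    QF P Q ≤ 1 - 1 / (d : ℝ) := by
  refine Real.sSup_le ?_ (Nat.one_sub_one_div_cast_nonneg d)
  rintro x ⟨ρ, hρ, rfl⟩
  linarith [one_div_le_classFid_sq hP hQ hρ]

lemma one_div_sq_mul_sum_offDiag_le {ι : Type*} [Fintype ι] [DecidableEq ι] (M : ι → ι → ℝ)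
    {c : ℝ} (hc : 0 ≤ c) (hM : ∀ i j, i ≠ j → M i j ≤ c) :
    1 / (Fintype.card ι : ℝ) ^ 2 * ∑ i, ∑ j, (if i = j then 0 else M i j) ≤
      (1 - 1 / Fintype.card ι) * c := by
  have row_sum (i : ι) : ∑ j, (if i = j then 0 else c) = Fintype.card ι * c - c := by
    have hsplit j : (if i = j then 0 else c) = c - if i = j then c else 0 := by
      split_ifs <;> ring
    simp [hsplit, Finset.sum_sub_distrib]
  calc 1 / (Fintype.card ι : ℝ) ^ 2 * ∑ i, ∑ j, (if i = j then 0 else M i j)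
      ≤ 1 / (Fintype.card ι : ℝ) ^ 2 * ∑ i : ι, ∑ j, (if i = j then 0 else c) := by
        gcongr with i _ j _
        split_ifs with hij
        exacts [le_rfl, hM i j hij]
    _ = 1 / (Fintype.card ι : ℝ) ^ 2 * (Fintype.card ι * (Fintype.card ι * c - c)) := by
        simp only [row_sum, Finset.sum_const, Finset.card_univ, nsmul_eq_mul]
    _ ≤ (1 - 1 / Fintype.card ι) * c := by
        rcases (Nat.zero_le (Fintype.card ι)).eq_or_lt with h | h
        · simp [← h, hc]
        · field_simp
          exact le_rfl

theorem stmt_11_general {d N : ℕ}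
    (r : Fin N → ℕ) (P : ∀ i, Fin (r i) → Matrix (Fin d) (Fin d) ℂ)
    (hP : ∀ i, IsProjObs (P i)) :
    (1 / (N : ℝ) ^ 2) * ∑ i, ∑ j, (if i = j then 0 else QF (P i) (P j))
      ≤ (1 - 1 / (N : ℝ)) * (1 - 1 / (d : ℝ)) := by
  simpa using one_div_sq_mul_sum_offDiag_le (fun i j => QF (P i) (P j))
    (Nat.one_sub_one_div_cast_nonneg d) fun i j _ => QF_le (hP i) (hP j)

theorem stmt_11 {d N : ℕ} (hd : 0 < d) (hN : 0 < N)
    (r : Fin N → ℕ) (P : ∀ i, Fin (r i) → Matrix (Fin d) (Fin d) ℂ)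
    (hP : ∀ i, IsProjObs (P i)) :
    (1 / (N : ℝ) ^ 2) * ∑ i, ∑ j, (if i = j then 0 else QF (P i) (P j))
      ≤ (1 - 1 / (N : ℝ)) * (1 - 1 / (d : ℝ)) :=
  stmt_11_general r P hP

end
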